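/- arXiv:1005.4148 — 8 statements merged into one kernel-verified Lean document; each statement's English description precedes it below -/
import Mathlib

section
/- The polynomial P_g(X) = X^{2g+1} - 2X^{2g-1} - 2X^2 + 1 has exactly one real root greater than √2. -/
/-!
For `x > √2` the equation `x ^ (n + 2) - 2 x ^ n - 2 x ^ 2 + 1 = 0` is equivalent to
`x ^ n - 3 / (x ^ 2 - 2) = 2`, whose left-hand side is strictly increasing on `(√2, ∞)`; this gives
uniqueness. The polynomial equals `-3` at `√2` and `2 ^ (n + 1) - 7 > 0` at `2` once `n ≥ 3`, so the
intermediate value theorem gives existence.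
-/

open Set

lemma pow_add_two_sub_eq_mul (n : ℕ) {x : ℝ} (hx : x ^ 2 - 2 ≠ 0) :
    x ^ (n + 2) - 2 * x ^ n - 2 * x ^ 2 + 1 = (x ^ 2 - 2) * (x ^ n - 3 / (x ^ 2 - 2) - 2) := by
  field_simp
  ring

lemma strictMonoOn_pow_sub_div (n : ℕ) :
    StrictMonoOn (fun x : ℝ => x ^ n - 3 / (x ^ 2 - 2)) (Ioi (Real.sqrt 2)) := by
  intro a ha b hb hab
  have ha0 : 0 < a := (Real.sqrt_nonneg 2).trans_lt ha
  have ha2 : 0 < a ^ 2 - 2 := by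
    nlinarith [Real.sq_sqrt (zero_le_two : (0 : ℝ) ≤ 2), Real.sqrt_nonneg 2, mem_Ioi.mp ha]
  have hpow : a ^ n ≤ b ^ n := pow_le_pow_left₀ ha0.le hab.le n
  have hdiv : 3 / (b ^ 2 - 2) < 3 / (a ^ 2 - 2) :=
    div_lt_div_of_pos_left (by norm_num) ha2 (by nlinarith)
  dsimp only
  linarith

lemma eq_of_pow_add_two_sub_eq_zero (n : ℕ) {a b : ℝ} (ha : Real.sqrt 2 < a) (hb : Real.sqrt 2 < b)
    (hPa : a ^ (n + 2) - 2 * a ^ n - 2 * a ^ 2 + 1 = 0)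
    (hPb : b ^ (n + 2) - 2 * b ^ n - 2 * b ^ 2 + 1 = 0) : a = b := by
  have key : ∀ x : ℝ, Real.sqrt 2 < x → x ^ (n + 2) - 2 * x ^ n - 2 * x ^ 2 + 1 = 0 →
      x ^ n - 3 / (x ^ 2 - 2) = 2 := by
    intro x hx hPx
    have hx2 : x ^ 2 - 2 ≠ 0 := by
      nlinarith [Real.sq_sqrt (zero_le_two : (0 : ℝ) ≤ 2), Real.sqrt_nonneg 2]
    rw [pow_add_two_sub_eq_mul n hx2, mul_eq_zero] at hPx
    exact sub_eq_zero.mp (hPx.resolve_left hx2)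
  exact (strictMonoOn_pow_sub_div n).injOn ha hb ((key a ha hPa).trans (key b hb hPb).symm)

lemma exists_pow_add_two_sub_eq_zero {n : ℕ} (hn : 3 ≤ n) :
    ∃ x : ℝ, Real.sqrt 2 < x ∧ x ^ (n + 2) - 2 * x ^ n - 2 * x ^ 2 + 1 = 0 := by
  have hsq : Real.sqrt 2 ^ 2 = 2 := Real.sq_sqrt zero_le_two
  have hsqrt_lt : Real.sqrt 2 < 2 := by nlinarith [Real.sqrt_nonneg 2]
  have hP_sqrt : Real.sqrt 2 ^ (n + 2) - 2 * Real.sqrt 2 ^ n - 2 * Real.sqrt 2 ^ 2 + 1 = -3 := by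
    rw [pow_add, hsq]
    ring
  have hP_two : 0 < (2 : ℝ) ^ (n + 2) - 2 * 2 ^ n - 2 * 2 ^ 2 + 1 := by
    have h8 : (8 : ℝ) ≤ 2 ^ n := by
      calc (8 : ℝ) = 2 ^ 3 := by norm_num
        _ ≤ 2 ^ n := pow_le_pow_right₀ one_le_two hn
    rw [pow_add]
    linarith
  obtain ⟨x, hx, hPx⟩ := intermediate_value_Ioo hsqrt_lt.le
    (f := fun x : ℝ => x ^ (n + 2) - 2 * x ^ n - 2 * x ^ 2 + 1) (by fun_prop)
    ⟨by simp only [hP_sqrt]; norm_num, hP_two⟩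
  exact ⟨x, hx.1, hPx⟩

theorem stmt_0 (g : ℕ) (hg : 2 ≤ g) :
    ∃! α : ℝ, Real.sqrt 2 < α ∧
      α ^ (2 * g + 1) - 2 * α ^ (2 * g - 1) - 2 * α ^ 2 + 1 = 0 := by
  rw [show 2 * g + 1 = 2 * g - 1 + 2 by omega]
  obtain ⟨α, hα⟩ := exists_pow_add_two_sub_eq_zero (n := 2 * g - 1) (by omega)
  exact ⟨α, hα, fun β hβ => eq_of_pow_add_two_sub_eq_zero _ hβ.1 hα.1 hβ.2 hα.2⟩
end

section
/- For g ≥ 2, P_g(√2) < 0 and P_g'(x) > 0 for all x > √2; consequently P_g has a unique real root α > √2. -/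
/-!
Writing `x ^ (2g+1) - 2 x ^ (2g-1) = x ^ (2g-1) (x² - 2)` gives `P_g(√2) = -3` and
`P_g(2) = 4 ^ g - 7 > 0`. For `x > √2` the derivative is
`x ^ (2g-2) ((2g+1) x² - 2(2g-1)) - 4x > 4 (x ^ (2g-2) - x) ≥ 0`, as `x > 1` and `2g - 2 ≥ 1`.
So `P_g` is strictly increasing on `[√2, ∞)`, and the intermediate value theorem on `[√2, 2]`
gives exactly one root there.
-/

open Set

def P (g : ℕ) (x : ℝ) : ℝ := x ^ (2 * g + 1) - 2 * x ^ (2 * g - 1) - 2 * x ^ 2 + 1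

section

variable {g : ℕ}

lemma P_eq (hg : 1 ≤ g) (x : ℝ) : P g x = x ^ (2 * g - 1) * (x ^ 2 - 2) - 2 * x ^ 2 + 1 := by
  have h : 2 * g + 1 = 2 * g - 1 + 2 := by omega
  rw [P, h, pow_add]
  ring

lemma P_sqrt_two (hg : 1 ≤ g) : P g √2 = -3 := by
  rw [P_eq hg, Real.sq_sqrt zero_le_two]
  ring

lemma P_two (hg : 1 ≤ g) : P g 2 = 4 ^ g - 7 := by
  have h : (2 : ℝ) ^ (2 * g - 1) * 2 = 4 ^ g := by
    rw [← pow_succ, Nat.sub_add_cancel (by omega), pow_mul]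
    norm_num
  rw [P_eq hg]
  linear_combination h

lemma P_two_pos (hg : 2 ≤ g) : 0 < P g 2 := by
  rw [P_two (by omega)]
  have : (4 : ℝ) ^ 2 ≤ 4 ^ g := pow_le_pow_right₀ (by norm_num) hg
  linarith

lemma hasDerivAt_P (hg : 1 ≤ g) (x : ℝ) :
    HasDerivAt (P g)
      ((2 * g + 1) * x ^ (2 * g) - 2 * (2 * g - 1) * x ^ (2 * g - 2) - 4 * x) x := by
  refine ((((hasDerivAt_pow (2 * g + 1) x).sub
    ((hasDerivAt_pow (2 * g - 1) x).const_mul 2)).sub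
    ((hasDerivAt_pow 2 x).const_mul 2)).add_const 1).congr_deriv ?_
  rw [Nat.add_sub_cancel, Nat.sub_sub, Nat.cast_sub (by omega)]
  push_cast
  ring

lemma deriv_P_pos (hg : 2 ≤ g) {x : ℝ} (hx : √2 < x) : 0 < deriv (P g) x := by
  have hx1 : 1 ≤ x := (Real.one_lt_sqrt_two).le.trans hx.le
  have hx2 : 2 < x ^ 2 := by
    simpa [Real.sq_sqrt zero_le_two] using pow_lt_pow_left₀ hx (Real.sqrt_nonneg 2) two_ne_zero
  set a := x ^ (2 * g - 2)
  have ha : x ≤ a := le_self_pow₀ hx1 (by omega)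
  have hsplit : x ^ (2 * g) = a * x ^ 2 := by
    rw [← pow_add, Nat.sub_add_cancel (by omega)]
  rw [(hasDerivAt_P (by omega) x).deriv, hsplit]
  -- `(2g+1) x² - 2(2g-1) = (2g+1)(x² - 2) + 4`
  have hg' : (0 : ℝ) < 2 * g + 1 := by positivity
  nlinarith [mul_pos (mul_pos hg' (sub_pos.mpr hx2)) (zero_lt_one.trans_le (hx1.trans ha))]

lemma strictMonoOn_P (hg : 2 ≤ g) : StrictMonoOn (P g) (Ici √2) := by
  refine strictMonoOn_of_deriv_pos (convex_Ici _) (by unfold P; fun_prop) fun x hx => ?_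
  rw [interior_Ici] at hx
  exact deriv_P_pos hg hx

lemma exists_P_eq_zero (hg : 2 ≤ g) : ∃ α ∈ Ioo √2 2, P g α = 0 := by
  have hsqrt : √2 < 2 := by
    rw [Real.sqrt_lt' two_pos]
    norm_num
  refine intermediate_value_Ioo hsqrt.le (by unfold P; fun_prop) ⟨?_, P_two_pos hg⟩
  rw [P_sqrt_two (by omega)]
  norm_num

end

theorem stmt_1 (g : ℕ) (hg : 2 ≤ g) :
    (Real.sqrt 2) ^ (2 * g + 1) - 2 * (Real.sqrt 2) ^ (2 * g - 1)
        - 2 * (Real.sqrt 2) ^ 2 + 1 < 0 ∧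
    (∀ x : ℝ, Real.sqrt 2 < x →
      0 < deriv (fun y : ℝ => y ^ (2 * g + 1) - 2 * y ^ (2 * g - 1) - 2 * y ^ 2 + 1) x) ∧
    (∃! α : ℝ, Real.sqrt 2 < α ∧
      α ^ (2 * g + 1) - 2 * α ^ (2 * g - 1) - 2 * α ^ 2 + 1 = 0) := by
  refine ⟨?_, fun x hx => deriv_P_pos hg hx, ?_⟩
  · change P g √2 < 0
    rw [P_sqrt_two (by omega)]
    norm_num
  · obtain ⟨α, ⟨hα, -⟩, hPα⟩ := exists_P_eq_zero hg
    refine ⟨α, ⟨hα, hPα⟩, fun β ⟨hβ, hPβ⟩ => ?_⟩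
    exact strictMonoOn_P hg |>.injOn hβ.le hα.le (hPβ.trans hPα.symm)
end

section
/- If α > √2 is a real root of X^{2g+1} - 2X^{2g-1} - 2X^2 + 1 with g ≥ 2, then 0 < α - √2 < 2^{-(g-1)}. -/
theorem stmt_2 (g : ℕ) (hg : 2 ≤ g) (α : ℝ) (hα : Real.sqrt 2 < α)
    (hroot : α ^ (2 * g + 1) - 2 * α ^ (2 * g - 1) - 2 * α ^ 2 + 1 = 0) :
    0 < α - Real.sqrt 2 ∧ α - Real.sqrt 2 < 1 / 2 ^ (g - 1) := by
  obtain ⟨k, rfl⟩ : ∃ k, g = k + 2 := ⟨g - 2, by omega⟩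
  set s := Real.sqrt 2 with hs
  have hs2 : s ^ 2 = 2 := Real.sq_sqrt (by norm_num)
  have hs0 : (0:ℝ) < s := Real.sqrt_pos.mpr (by norm_num)
  have hα0 : 0 < α := lt_trans hs0 hα
  have e1 : 2 * (k + 2) + 1 = 2 * k + 5 := by omega
  have e2 : 2 * (k + 2) - 1 = 2 * k + 3 := by omega
  have e3 : k + 2 - 1 = k + 1 := by omega
  rw [e1, e2] at hroot
  rw [e3]
  have hsplit : α ^ (2 * k + 5) = α ^ (2 * k + 3) * α ^ 2 := by
    rw [← pow_add]
  have hkey : α ^ (2 * k + 3) * (α ^ 2 - 2) = 2 * α ^ 2 - 1 := by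
    rw [hsplit] at hroot; ring_nf at hroot ⊢; linarith
  have hα2 : 2 < α ^ 2 := by nlinarith
  have hsa : 2 < s * α := by nlinarith
  have hpowpos : 0 < α ^ (2 * k + 3) := pow_pos hα0 _
  have hD : 0 < (α + s) * α ^ (2 * k + 3) := by positivity
  have h1 : (α - s) * ((α + s) * α ^ (2 * k + 3)) = 2 * α ^ 2 - 1 := by
    have : (α - s) * (α + s) = α ^ 2 - 2 := by rw [← hs2]; ring
    calc (α - s) * ((α + s) * α ^ (2 * k + 3))
        = ((α - s) * (α + s)) * α ^ (2 * k + 3) := by ring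
      _ = (α ^ 2 - 2) * α ^ (2 * k + 3) := by rw [this]
      _ = 2 * α ^ 2 - 1 := by rw [mul_comm]; exact hkey
  have hpow : (2:ℝ) ^ k ≤ α ^ (2 * k) := by
    calc (2:ℝ) ^ k ≤ (α ^ 2) ^ k := pow_le_pow_left₀ (by norm_num) (le_of_lt hα2) k
      _ = α ^ (2 * k) := by rw [← pow_mul]
  have hA : 2 * (2 * α ^ 2 - 1) < (α + s) * α ^ 3 := by nlinarith [pow_pos hα0 3]
  have h2 : 2 ^ (k + 1) * (2 * α ^ 2 - 1) < (α + s) * α ^ (2 * k + 3) := by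
    have hd : α ^ (2 * k + 3) = α ^ (2 * k) * α ^ 3 := by rw [← pow_add]
    have hApos : 0 < (α + s) * α ^ 3 := by positivity
    calc 2 ^ (k + 1) * (2 * α ^ 2 - 1) = 2 ^ k * (2 * (2 * α ^ 2 - 1)) := by ring
      _ < 2 ^ k * ((α + s) * α ^ 3) := by
          exact mul_lt_mul_of_pos_left hA (by positivity)
      _ ≤ α ^ (2 * k) * ((α + s) * α ^ 3) := by
          exact mul_le_mul_of_nonneg_right hpow (le_of_lt hApos)
      _ = (α + s) * α ^ (2 * k + 3) := by rw [hd]; ring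
  constructor
  · linarith
  · rw [lt_div_iff₀ (by positivity)]
    have hfin := mul_lt_mul_of_pos_right h2 hD
    nlinarith [h1, h2, hD]
end

section
/- For all g ≥ 2, (X+1)·χ_g(X) = X^{2g+1} - 2X^{2g-1} - 2X^2 + 1, where χ_g is the characteristic polynomial of the 2g×2g matrix M_g defined in the context. -/
/-- The 2g×2g integer matrix `M_g` (rows and columns indexed from 0, corresponding to the
1-indexed description: m_{1,g}=2, m_{1,j}=1 for g+1≤j≤2g, m_{i,i+g-1}=1 for 2≤i≤g,
m_{i,i-g}=1 for g+1≤i≤2g-1, m_{2g,g}=m_{2g,2g}=1). -/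
def Mmat (g : ℕ) : Matrix (Fin (2 * g)) (Fin (2 * g)) ℤ :=
  Matrix.of fun i j =>
    if (i : ℕ) = 0 then
      (if (j : ℕ) = g - 1 then 2 else if g ≤ (j : ℕ) then 1 else 0)
    else if (i : ℕ) ≤ g - 1 then
      (if (j : ℕ) = (i : ℕ) + g - 1 then 1 else 0)
    else if (i : ℕ) ≤ 2 * g - 2 then
      (if (j : ℕ) + g = (i : ℕ) then 1 else 0)
    else
      (if (j : ℕ) = g - 1 ∨ (j : ℕ) = 2 * g - 1 then 1 else 0)

/-!
Split the basis into two halves of size `g`. Then `M_g = [[A, B], [1, D]]` with `A = 2 E_{0,g-1}`,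
`D = E_{g-1,g-1}` and `B` the all-ones first row plus the subdiagonal, so the characteristic
matrix is `[[X - A, -B], [-1, X - D]]` and its determinant is that of the `g × g` Schur
complement `K = (X - A)(X - D) - B`. The matrix `K` has an arbitrary first row, diagonal entries
`X²` (and `X² - X` at the end) below it and `-1` on the subdiagonal, so expanding along the last
column gives a Horner recursion for `det K`: it equals `(1 - 2X) + (X² - X) a` where
`(X² - 1) a = X^(2g) - 2X^(2g-2) + 1`. Multiplying by `X + 1` gives the claimed polynomial.
-/

open Polynomial Matrix

namespace Matrix

variable {n R : Type*} [Fintype n] [DecidableEq n] [CommRing R]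

theorem det_fromBlocks_neg_one₂₁ (A B D : Matrix n n R) :
    (fromBlocks A B (-1) D).det = (A * D + B).det := by
  have h : fromBlocks 1 (A - 1) 0 1 * fromBlocks A B (-1) D =
      fromBlocks 1 (B + (A - 1) * D) (-1) D := by
    simp only [fromBlocks_multiply]
    congr 1 <;> noncomm_ring
  have := congrArg det h
  rw [det_mul, det_fromBlocks_zero₂₁, det_one, one_mul, one_mul, det_fromBlocks_one₁₁] at this
  rw [this]
  congr 1
  noncomm_ring

end Matrix

section FirstRowHessenberg

variable {R : Type*} [CommRing R]

def firstRowHessenberg (r d : ℕ → R) (n : ℕ) : Matrix (Fin n) (Fin n) R :=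
  of fun i j =>
    if (i : ℕ) = 0 then r j else if (j : ℕ) = i then d i else if (j : ℕ) + 1 = i then -1 else 0

def hornerSeq (r d : ℕ → R) : ℕ → R
  | 0 => r 0
  | n + 1 => r (n + 1) + d (n + 1) * hornerSeq r d n

variable (r d : ℕ → R)

theorem det_firstRowHessenberg_submatrix_succ_castSucc (n : ℕ) :
    ((firstRowHessenberg r d (n + 1)).submatrix Fin.succ Fin.castSucc).det = (-1) ^ n := by
  have htri :
      ((firstRowHessenberg r d (n + 1)).submatrix Fin.succ Fin.castSucc).IsUpperTriangular := by
    intro a b (hba : (b : ℕ) < a)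
    simp only [firstRowHessenberg, submatrix_apply, of_apply, Fin.val_succ, Fin.val_castSucc]
    rw [if_neg (by omega), if_neg (by omega), if_neg (by omega)]
  rw [det_of_isUpperTriangular htri]
  simp [firstRowHessenberg]

theorem firstRowHessenberg_submatrix_castSucc (n : ℕ) :
    (firstRowHessenberg r d (n + 1)).submatrix Fin.castSucc Fin.castSucc =
      firstRowHessenberg r d n :=
  rfl

theorem det_firstRowHessenberg (n : ℕ) :
    (firstRowHessenberg r d (n + 1)).det = hornerSeq r d n := by
  induction n with
  | zero => simp [firstRowHessenberg, hornerSeq]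
  | succ n ih =>
    -- Laplace expansion along the last column, where only rows `0` and `n + 1` are nonzero.
    rw [det_succ_column _ (Fin.last (n + 1)), Fin.sum_univ_succ, Fin.sum_univ_castSucc]
    have hmid (i : Fin n) :
        firstRowHessenberg r d (n + 2) i.castSucc.succ (Fin.last (n + 1)) = 0 := by
      simp only [firstRowHessenberg, of_apply, Fin.val_succ, Fin.val_castSucc, Fin.val_last]
      rw [if_neg (by omega), if_neg (by omega), if_neg (by omega)]
    simp only [hmid, mul_zero, zero_mul, Finset.sum_const_zero, zero_add, Fin.succAbove_zero,
      Fin.succ_last, Fin.succAbove_last, det_firstRowHessenberg_submatrix_succ_castSucc,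
      firstRowHessenberg_submatrix_castSucc, ih]
    simp [firstRowHessenberg, hornerSeq, mul_right_comm _ (r (n + 1)), ← mul_pow]

end FirstRowHessenberg

def finSumFinEquivTwoMul (g : ℕ) : Fin g ⊕ Fin g ≃ Fin (2 * g) :=
  finSumFinEquiv.trans (finCongr (two_mul g).symm)

@[simp]
theorem finSumFinEquivTwoMul_inl_val {g : ℕ} (i : Fin g) :
    (finSumFinEquivTwoMul g (Sum.inl i) : ℕ) = i :=
  rfl

@[simp]
theorem finSumFinEquivTwoMul_inr_val {g : ℕ} (i : Fin g) :
    (finSumFinEquivTwoMul g (Sum.inr i) : ℕ) = g + i :=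
  rfl

def Mmat₁₁ (g : ℕ) : Matrix (Fin g) (Fin g) ℤ :=
  of fun i j => if (i : ℕ) = 0 ∧ (j : ℕ) = g - 1 then 2 else 0

def Mmat₁₂ (g : ℕ) : Matrix (Fin g) (Fin g) ℤ :=
  of fun i j => if (i : ℕ) = 0 ∨ (j : ℕ) + 1 = i then 1 else 0

def Mmat₂₂ (g : ℕ) : Matrix (Fin g) (Fin g) ℤ :=
  of fun i j => if (i : ℕ) = g - 1 ∧ (j : ℕ) = g - 1 then 1 else 0

theorem Mmat_submatrix_eq_fromBlocks (g : ℕ) :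
    (Mmat g).submatrix (finSumFinEquivTwoMul g) (finSumFinEquivTwoMul g) =
      fromBlocks (Mmat₁₁ g) (Mmat₁₂ g) 1 (Mmat₂₂ g) := by
  ext (i | i) (j | j) <;> have := i.isLt <;> have := j.isLt <;>
    simp only [Mmat, Mmat₁₁, Mmat₁₂, Mmat₂₂, submatrix_apply, of_apply, fromBlocks_apply₁₁,
      fromBlocks_apply₁₂, fromBlocks_apply₂₁, fromBlocks_apply₂₂, one_apply, Fin.ext_iff,
      finSumFinEquivTwoMul_inl_val, finSumFinEquivTwoMul_inr_val] <;>
    split_ifs <;> omega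

theorem charmatrix_Mmat₂₂ (g : ℕ) :
    charmatrix (Mmat₂₂ g) = diagonal fun j : Fin g => if (j : ℕ) = g - 1 then X - 1 else X := by
  ext i j : 1
  by_cases h : i = j
  · subst h
    simp only [Mmat₂₂, charmatrix_apply_eq, of_apply, and_self,
      MonoidWithZeroHom.map_ite_one_zero, diagonal_apply_eq]
    split_ifs <;> simp
  · rw [charmatrix_apply_ne _ _ _ h, diagonal_apply_ne _ h]
    simp only [Mmat₂₂, of_apply]
    rw [if_neg (by omega), C_0, neg_zero]

noncomputable def schurRow (g j : ℕ) : ℤ[X] :=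
  if j = 0 then X ^ 2 - 1 else if j = g - 1 then 1 - 2 * X else -1

noncomputable def schurDiag (g i : ℕ) : ℤ[X] :=
  if i = g - 1 then X ^ 2 - X else X ^ 2

theorem Mmat_schurComplement_eq_firstRowHessenberg (g : ℕ) (hg : 2 ≤ g) :
    charmatrix (Mmat₁₁ g) * charmatrix (Mmat₂₂ g) + -(Mmat₁₂ g).map C =
      firstRowHessenberg (schurRow g) (schurDiag g) g := by
  ext i j : 1
  have := i.isLt
  have := j.isLt
  rw [charmatrix_Mmat₂₂, Matrix.add_apply, mul_diagonal]
  simp only [Matrix.neg_apply, map_apply, charmatrix_apply, diagonal_apply, Mmat₁₁, Mmat₁₂,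
    of_apply, Fin.ext_iff, firstRowHessenberg, schurRow, schurDiag]
  split_ifs <;> first | omega | (simp <;> ring)

theorem charpoly_Mmat (g : ℕ) (hg : 2 ≤ g) :
    (Mmat g).charpoly = hornerSeq (schurRow g) (schurDiag g) (g - 1) := by
  obtain ⟨n, rfl⟩ : ∃ n, g = n + 1 := ⟨g - 1, by omega⟩
  rw [← charpoly_reindex (finSumFinEquivTwoMul _).symm, reindex_apply, Equiv.symm_symm,
    Mmat_submatrix_eq_fromBlocks, charpoly, charmatrix_fromBlocks, Matrix.map_one _ C_0 C_1,
    det_fromBlocks_neg_one₂₁, Mmat_schurComplement_eq_firstRowHessenberg _ hg,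
    det_firstRowHessenberg, Nat.add_sub_cancel]

theorem X_sq_sub_one_mul_hornerSeq_schurRow (g k : ℕ) (hk : k + 1 < g) :
    (X ^ 2 - 1) * hornerSeq (schurRow g) (schurDiag g) k =
      X ^ (2 * k + 4) - 2 * X ^ (2 * k + 2) + 1 := by
  induction k with
  | zero =>
    simp only [hornerSeq, schurRow, if_true]
    ring
  | succ k ih =>
    simp only [hornerSeq, schurRow, schurDiag, if_neg (Nat.succ_ne_zero k),
      if_neg (show k + 1 ≠ g - 1 by omega)]
    linear_combination (X ^ 2 : ℤ[X]) * ih (by omega)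

theorem stmt_8 (g : ℕ) (hg : 2 ≤ g) :
    (Polynomial.X + 1) * (Mmat g).charpoly =
      Polynomial.X ^ (2 * g + 1) - 2 * Polynomial.X ^ (2 * g - 1)
        - 2 * Polynomial.X ^ 2 + 1 := by
  obtain ⟨k, rfl⟩ : ∃ k, g = k + 2 := ⟨g - 2, by omega⟩
  rw [charpoly_Mmat _ hg, show k + 2 - 1 = k + 1 from rfl,
    show 2 * (k + 2) - 1 = 2 * k + 3 by omega, hornerSeq, schurRow, schurDiag,
    if_neg (by omega), if_pos (by omega), if_pos (by omega)]
  linear_combination (X : ℤ[X]) * X_sq_sub_one_mul_hornerSeq_schurRow (k + 2) k (by omega)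
end

section
/- For every integer g ≥ 2, there exists a real number α with √2 < α < √2 + 2^{1-g} satisfying α^{2g+1} - 2α^{2g-1} - 2α^2 + 1 = 0. -/
/-!
Write the polynomial as `x ^ (2m+1) (x ^ 2 - 2) - (2 x ^ 2 - 1)` with `m = g - 1`. At `√2` it
equals `-3`. At `√2 + ε` with `ε = 2⁻ᵐ`, Bernoulli's inequality gives
`(√2 + ε) ^ (2m+1) ≥ 2ᵐ (√2 + (2m+1) ε)`, while `x ^ 2 - 2 = ε (2√2 + ε)`; since `2ᵐ ε = 1` the
first term is at least `(√2 + (2m+1) ε)(2√2 + ε)`, which exceeds `2 x ^ 2 - 1` once `m ≥ 1`.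
The intermediate value theorem then gives a root in between.
-/

open Real

lemma sqrt_two_pow_two_mul (m : ℕ) : √2 ^ (2 * m) = 2 ^ m := by
  rw [pow_mul, sq_sqrt zero_le_two]

lemma sqrt_two_pow_two_mul_add_three_sub (m : ℕ) :
    √2 ^ (2 * m + 3) - 2 * √2 ^ (2 * m + 1) - 2 * √2 ^ 2 + 1 = -3 := by
  have h2 : √2 ^ 2 = 2 := sq_sqrt zero_le_two
  rw [show 2 * m + 3 = 2 * m + 1 + 2 by ring, pow_add, h2]
  ring

lemma two_pow_mul_sqrt_two_add_le_pow (m : ℕ) {ε : ℝ} (hε : 0 ≤ ε) :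
    2 ^ m * (√2 + (2 * m + 1) * ε) ≤ (√2 + ε) ^ (2 * m + 1) := by
  have h := pow_add_mul_le_add_pow (sqrt_nonneg 2) (by positivity : 0 ≤ 2 * √2 + ε) (2 * m + 1)
  rw [Nat.add_sub_cancel, pow_succ, sqrt_two_pow_two_mul] at h
  push_cast at h
  linarith

lemma sqrt_two_add_pow_two_mul_add_three_sub_pos {m : ℕ} (hm : 1 ≤ m) {ε : ℝ}
    (hε_mul : 2 ^ m * ε = 1) :
    0 < (√2 + ε) ^ (2 * m + 3) - 2 * (√2 + ε) ^ (2 * m + 1) - 2 * (√2 + ε) ^ 2 + 1 := by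
  set x := √2 + ε
  have hε : 0 < ε := pos_of_mul_pos_right (hε_mul ▸ one_pos) (by positivity)
  have h2 : √2 ^ 2 = 2 := sq_sqrt zero_le_two
  have hx_sq : x ^ 2 - 2 = ε * (2 * √2 + ε) := by linear_combination h2
  have hx_pow : x ^ (2 * m + 3) - 2 * x ^ (2 * m + 1) = x ^ (2 * m + 1) * (x ^ 2 - 2) := by ring
  have hbernoulli : (√2 + (2 * m + 1) * ε) * (2 * √2 + ε) ≤ x ^ (2 * m + 1) * (x ^ 2 - 2) := by
    calc (√2 + (2 * m + 1) * ε) * (2 * √2 + ε)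
        = 2 ^ m * (√2 + (2 * m + 1) * ε) * (ε * (2 * √2 + ε)) := by
          linear_combination (-(√2 + (2 * m + 1) * ε) * (2 * √2 + ε)) * hε_mul
      _ ≤ x ^ (2 * m + 1) * (x ^ 2 - 2) := by
          rw [hx_sq]
          gcongr
          exact two_pow_mul_sqrt_two_add_le_pow m hε.le
  have hslack : 0 < (√2 + (2 * m + 1) * ε) * (2 * √2 + ε) - 2 * x ^ 2 + 1 := by
    have hm' : (0 : ℝ) ≤ m - 1 := sub_nonneg.2 (by exact_mod_cast hm)
    rw [show (√2 + (2 * m + 1) * ε) * (2 * √2 + ε) - 2 * x ^ 2 + 1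
        = 1 + √2 * ε + (2 * (m - 1 : ℝ) + 1) * (ε * (2 * √2 + ε)) by ring]
    positivity
  rw [hx_pow]
  linarith

theorem stmt_10 (g : ℕ) (hg : 2 ≤ g) :
    ∃ α : ℝ, Real.sqrt 2 < α ∧ α < Real.sqrt 2 + (2 : ℝ) ^ ((1 : ℤ) - (g : ℤ)) ∧
      α ^ (2 * g + 1) - 2 * α ^ (2 * g - 1) - 2 * α ^ 2 + 1 = 0 := by
  obtain ⟨m, rfl⟩ : ∃ m, g = m + 1 := ⟨g - 1, by omega⟩
  have hε : (2 : ℝ) ^ ((1 : ℤ) - ((m + 1 : ℕ) : ℤ)) = (2 ^ m)⁻¹ := by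
    rw [show (1 : ℤ) - ((m + 1 : ℕ) : ℤ) = -(m : ℤ) by push_cast; ring, zpow_neg, zpow_natCast]
  rw [hε, show 2 * (m + 1) + 1 = 2 * m + 3 by ring, show 2 * (m + 1) - 1 = 2 * m + 1 by omega]
  have hcont : ContinuousOn (fun x : ℝ => x ^ (2 * m + 3) - 2 * x ^ (2 * m + 1) - 2 * x ^ 2 + 1)
      (Set.Icc (√2) (√2 + (2 ^ m)⁻¹)) := by fun_prop
  obtain ⟨α, hα, hroot⟩ := intermediate_value_Ioo (le_add_of_nonneg_right (by positivity)) hcont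
    ⟨by simp only [sqrt_two_pow_two_mul_add_three_sub]; norm_num,
      sqrt_two_add_pow_two_mul_add_three_sub_pos (by omega)
        (mul_inv_cancel₀ (by positivity))⟩
  exact ⟨α, hα.1, hα.2, hroot⟩
end

section
/- Let g ≥ 2 be even and α > √2 a real root of X^{2g+2} - 2X^{2g} - 2X^{g+1} - 2X^2 + 1. Then 0 < α - √2 < 2/(√2)^g. -/
theorem stmt_11 (g : ℕ) (hg : 2 ≤ g) (hge : Even g) (α : ℝ) (hα : Real.sqrt 2 < α)
    (hroot : α ^ (2 * g + 2) - 2 * α ^ (2 * g) - 2 * α ^ (g + 1) - 2 * α ^ 2 + 1 = 0) :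
    0 < α - Real.sqrt 2 ∧ α - Real.sqrt 2 < 2 / (Real.sqrt 2) ^ g := by
  set s := Real.sqrt 2 with hsdef
  have hs2 : s ^ 2 = 2 := Real.sq_sqrt (by norm_num)
  have hs0 : 0 < s := Real.sqrt_pos.mpr (by norm_num)
  have hs1 : 1 < s := by nlinarith
  have hα1 : 1 < α := lt_trans hs1 hα
  have hα0 : 0 < α := lt_trans one_pos hα1
  have e1 : α ^ (2 * g + 2) = α ^ g * α ^ g * α ^ 2 := by
    rw [two_mul, ← pow_add, ← pow_add]
  have e2 : α ^ (g + 1) = α ^ g * α := by rw [pow_succ]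
  have e3 : α ^ (2 * g) = α ^ g * α ^ g := by rw [two_mul, pow_add]
  have key : α ^ g * α ^ g * (α ^ 2 - 2) = 2 * (α ^ g * α) + 2 * α ^ 2 - 1 := by
    rw [e1, e2, e3] at hroot; ring_nf at hroot ⊢; linarith
  have hsg : s ^ g ≤ α ^ g := pow_le_pow_left₀ hs0.le hα.le g
  have hgg : α ^ g * α ^ 2 ≤ α ^ g * α ^ g := by
    have h : α ^ (g + 2) ≤ α ^ (2 * g) := pow_le_pow_right₀ hα1.le (by omega)
    rw [pow_add, e3] at h; linarith
  have hsgpos : 0 < s ^ g := pow_pos hs0 g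
  have hagpos : 0 < α ^ g := pow_pos hα0 g
  refine ⟨by linarith, ?_⟩
  rw [lt_div_iff₀ hsgpos]
  have hmain : (α - s) * s ^ g * ((α + s) * (α ^ g * α ^ g)) <
      2 * ((α + s) * (α ^ g * α ^ g)) := by
    have lhs_eq : (α - s) * s ^ g * ((α + s) * (α ^ g * α ^ g)) =
        s ^ g * (α ^ g * α ^ g * (α ^ 2 - 2)) := by
      rw [← hs2]; ring
    rw [lhs_eq, key]
    have h1 : s ^ g * (2 * (α ^ g * α) + 2 * α ^ 2 - 1) <
        s ^ g * (2 * (α ^ g * α)) + s ^ g * (2 * α ^ 2) := by nlinarith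
    have h2 : s ^ g * (2 * (α ^ g * α)) ≤ α ^ g * (2 * (α ^ g * α)) :=
      mul_le_mul_of_nonneg_right hsg (by positivity)
    have h3 : s ^ g * (2 * α ^ 2) ≤ α ^ g * (2 * α ^ 2) :=
      mul_le_mul_of_nonneg_right hsg (by positivity)
    have h4 : α ^ g * (2 * α ^ 2) ≤ 2 * (α ^ g * α ^ g) := by nlinarith
    have h5 : 2 * (α ^ g * α ^ g) < 2 * (s * (α ^ g * α ^ g)) := by nlinarith
    nlinarith
  have hpos : 0 < (α + s) * (α ^ g * α ^ g) := by positivity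
  by_contra h
  push_neg at h
  nlinarith
end

section
/- Let g ≥ 3 be odd and α > √2 a real root of X^{2g+2} - 2X^{2g} - 4X^{g+2} + 4X^g + 2X^2 - 1. Then 0 < α - √2 < 4/(√2)^g. -/
/-!
Viewed as a polynomial in `A = α ^ g`, the defining equation reads
`A² (α² - 2) - 4 A (α² - 1) + (2α² - 1) = 0`. The constant term is positive, so
`A (α² - 2) < 4 (α² - 1)`. Since `A ≥ α³`, this forces `α < 2`, hence `α² - 1 < α + √2`, and
dividing `A (α - √2)(α + √2) < 4 (α + √2)` by `α + √2` gives `(α - √2) α ^ g < 4`.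
Finally `√2 ^ g < α ^ g`.
-/

open Real

lemma root_poly_eq_quadratic_in_pow {R : Type*} [CommRing R] (x : R) (n : ℕ) :
    x ^ (2 * n + 2) - 2 * x ^ (2 * n) - 4 * x ^ (n + 2) + 4 * x ^ n + 2 * x ^ 2 - 1
      = (x ^ n) ^ 2 * (x ^ 2 - 2) - 4 * x ^ n * (x ^ 2 - 1) + (2 * x ^ 2 - 1) := by
  ring

lemma pow_mul_sq_sub_two_lt {α : ℝ} {n : ℕ} (hα : 1 < α)
    (hroot : (α ^ n) ^ 2 * (α ^ 2 - 2) - 4 * α ^ n * (α ^ 2 - 1) + (2 * α ^ 2 - 1) = 0) :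
    α ^ n * (α ^ 2 - 2) < 4 * (α ^ 2 - 1) := by
  have hpow : 0 < α ^ n := pow_pos (by linarith) n
  have hconst : 0 < 2 * α ^ 2 - 1 := by nlinarith
  have hprod : α ^ n * (α ^ n * (α ^ 2 - 2) - 4 * (α ^ 2 - 1)) < 0 := by
    linear_combination hroot + hconst
  exact sub_neg.mp (neg_of_mul_neg_right hprod hpow.le)

lemma lt_two_of_pow_mul_sq_sub_two_lt {α : ℝ} {n : ℕ} (hα : √2 < α) (hn : 3 ≤ n)
    (h : α ^ n * (α ^ 2 - 2) < 4 * (α ^ 2 - 1)) : α < 2 := by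
  have hsq : √2 ^ 2 = 2 := sq_sqrt (by norm_num)
  have hα1 : 1 < α := one_lt_sqrt_two.trans hα
  have hα2 : 0 ≤ α ^ 2 - 2 := by nlinarith [sqrt_nonneg 2]
  have hcube : α ^ 3 * (α ^ 2 - 2) < 4 * (α ^ 2 - 1) :=
    lt_of_le_of_lt (mul_le_mul_of_nonneg_right (pow_le_pow_right₀ hα1.le hn) hα2) h
  nlinarith [sq_nonneg (α - 2), sq_nonneg (α ^ 2 - 2)]

lemma sub_sqrt_two_mul_pow_lt_four {α : ℝ} {n : ℕ} (hα : √2 < α) (hα2 : α < 2)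
    (h : α ^ n * (α ^ 2 - 2) < 4 * (α ^ 2 - 1)) : (α - √2) * α ^ n < 4 := by
  have hsq : √2 ^ 2 = 2 := sq_sqrt (by norm_num)
  have hsum : 0 < α + √2 := by linarith [sqrt_nonneg 2]
  have hsq_sub : α ^ 2 - 1 < α + √2 := by nlinarith [one_lt_sqrt_two]
  rw [← mul_lt_mul_iff_left₀ hsum]
  calc (α - √2) * α ^ n * (α + √2) = α ^ n * (α ^ 2 - 2) := by
        linear_combination (-(α ^ n)) * hsq
    _ < 4 * (α + √2) := by linarith

theorem stmt_12_general (g : ℕ) (hg : 3 ≤ g) (α : ℝ) (hα : Real.sqrt 2 < α)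
    (hroot : α ^ (2 * g + 2) - 2 * α ^ (2 * g) - 4 * α ^ (g + 2) + 4 * α ^ g
      + 2 * α ^ 2 - 1 = 0) :
    0 < α - Real.sqrt 2 ∧ α - Real.sqrt 2 < 4 / (Real.sqrt 2) ^ g := by
  rw [root_poly_eq_quadratic_in_pow] at hroot
  have hbound := pow_mul_sq_sub_two_lt (one_lt_sqrt_two.trans hα) hroot
  have hmain := sub_sqrt_two_mul_pow_lt_four hα
    (lt_two_of_pow_mul_sq_sub_two_lt hα hg hbound) hbound
  have hpow : √2 ^ g < α ^ g := pow_lt_pow_left₀ hα (sqrt_nonneg 2) (by omega)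
  refine ⟨sub_pos.mpr hα, ?_⟩
  rw [lt_div_iff₀ (pow_pos (sqrt_pos.mpr two_pos) g)]
  calc (α - √2) * √2 ^ g < (α - √2) * α ^ g := mul_lt_mul_of_pos_left hpow (sub_pos.mpr hα)
    _ < 4 := hmain

theorem stmt_12 (g : ℕ) (hg : 3 ≤ g) (hgo : Odd g) (α : ℝ) (hα : Real.sqrt 2 < α)
    (hroot : α ^ (2 * g + 2) - 2 * α ^ (2 * g) - 4 * α ^ (g + 2) + 4 * α ^ g
      + 2 * α ^ 2 - 1 = 0) :
    0 < α - Real.sqrt 2 ∧ α - Real.sqrt 2 < 4 / (Real.sqrt 2) ^ g :=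
  stmt_12_general g hg α hα hroot
end

section
/- Let τ ∈ ℝ^{2g} satisfy τ_i = α^{-2} τ_{i+1} for i ∈ {1,…,2g-2}\{g}, τ_{2g-1} = α^{-1} τ_g, and τ_g + τ_{2g} = α^{-1} τ_{2g}, with α > 1 and τ_{2g} < 0, τ_i > 0 for i < 2g. Then the total sum s = Σ_{i=1}^{2g} τ_i equals α^{-(2g-1)} τ_{2g}, and in particular s < 0. -/
/-!
Put `β = α⁻¹`. The recurrences make `τ` geometric with ratio `β²` on each of the blocks
`1, …, g` and `g + 1, …, 2g - 1`, and the coupling `τ_{2g-1} = β τ_g` interleaves the two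
blocks into a single geometric progression `τ_g, β τ_g, β² τ_g, …, β^{2g-2} τ_g`. Hence
`τ_1 + ⋯ + τ_{2g-1} = τ_g (1 + β + ⋯ + β^{2g-2})`, and since `τ_g = (β - 1) τ_{2g}` this
telescopes to `(β^{2g-1} - 1) τ_{2g}`; adding `τ_{2g}` leaves `β^{2g-1} τ_{2g}`.
-/

open Finset

theorem sum_Ioc_eq_geom_sum_mul_of_eq_mul_succ {R : Type*} [CommSemiring R] {u : ℕ → R}
    {r : R} {a b : ℕ} (hab : a ≤ b) (h : ∀ i, a < i → i < b → u i = r * u (i + 1)) :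
    ∑ i ∈ Ioc a b, u i = (∑ k ∈ range (b - a), r ^ k) * u b := by
  obtain ⟨n, rfl⟩ := Nat.exists_eq_add_of_le hab
  rw [Nat.add_sub_cancel_left]
  induction n with
  | zero => simp
  | succ n ih =>
    have hlast : (∑ k ∈ range n, r ^ k) * u (a + n) =
        (∑ k ∈ range n, r ^ k) * (r * u (a + n + 1)) := by
      rcases n.eq_zero_or_pos with rfl | hn
      · simp
      · rw [h (a + n) (by omega) (by omega)]
    rw [← add_assoc, sum_Ioc_succ_top (by omega), ih (by omega) (fun i hi hi' => h i hi (by omega)),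
      hlast, geom_sum_succ]
    ring

theorem geom_sum_sq_add_mul_geom_sum_sq {R : Type*} [CommSemiring R] (x : R) (n : ℕ) :
    ∑ k ∈ range (n + 1), (x ^ 2) ^ k + x * ∑ k ∈ range n, (x ^ 2) ^ k =
      ∑ j ∈ range (2 * n + 1), x ^ j := by
  induction n with
  | zero => simp
  | succ n ih =>
    rw [show 2 * (n + 1) + 1 = 2 * n + 1 + 1 + 1 by ring, sum_range_succ (x ^ ·) (2 * n + 1 + 1),
      sum_range_succ (x ^ ·) (2 * n + 1), ← ih, sum_range_succ (fun k => (x ^ 2) ^ k) (n + 1),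
      sum_range_succ (fun k => (x ^ 2) ^ k) n]
    ring

theorem stmt_17_general (g : ℕ) (hg : 2 ≤ g) (α : ℝ) (hα : 1 < α)
    (τ : ℕ → ℝ)
    (h1 : ∀ i, 1 ≤ i → i ≤ 2 * g - 2 → i ≠ g → τ i = α⁻¹ ^ 2 * τ (i + 1))
    (h2 : τ (2 * g - 1) = α⁻¹ * τ g)
    (h3 : τ g + τ (2 * g) = α⁻¹ * τ (2 * g))
    (hneg : τ (2 * g) < 0) :
    (∑ i ∈ Finset.Icc 1 (2 * g), τ i) = τ (2 * g) / α ^ (2 * g - 1) ∧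
      (∑ i ∈ Finset.Icc 1 (2 * g), τ i) < 0 := by
  obtain ⟨n, rfl⟩ : ∃ n, g = n + 1 := ⟨g - 1, by omega⟩
  rw [show 2 * (n + 1) - 1 = n + 1 + n by omega] at h2 ⊢
  have first : ∑ i ∈ Ioc 0 (n + 1), τ i = (∑ k ∈ range (n + 1), (α⁻¹ ^ 2) ^ k) * τ (n + 1) :=
    sum_Ioc_eq_geom_sum_mul_of_eq_mul_succ (Nat.zero_le _) fun i hi hi' =>
      h1 i hi (by omega) (by omega)
  have second := sum_Ioc_eq_geom_sum_mul_of_eq_mul_succ (u := τ) (r := α⁻¹ ^ 2)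
    (Nat.le_add_right (n + 1) n) fun i hi hi' => h1 i (by omega) (by omega) (by omega)
  rw [Nat.add_sub_cancel_left] at second
  have hsum : ∑ i ∈ Icc 1 (2 * (n + 1)), τ i =
      (∑ j ∈ range (2 * n + 1), α⁻¹ ^ j) * τ (n + 1) + τ (2 * (n + 1)) := by
    rw [← geom_sum_sq_add_mul_geom_sum_sq, show 2 * (n + 1) = n + 1 + n + 1 by ring,
      show Icc 1 _ = Ioc 0 _ from Icc_add_one_left_eq_Ioc 0 _, sum_Ioc_succ_top (by omega),
      ← sum_Ioc_consecutive _ (Nat.zero_le (n + 1)) (by omega), first, second, h2]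
    ring
  have key : ∑ i ∈ Icc 1 (2 * (n + 1)), τ i = τ (2 * (n + 1)) / α ^ (n + 1 + n) := by
    rw [hsum, show τ (n + 1) = (α⁻¹ - 1) * τ (2 * (n + 1)) by linarith, ← mul_assoc, geom_sum_mul,
      show 2 * n + 1 = n + 1 + n by ring, div_eq_mul_inv, ← inv_pow]
    ring
  exact ⟨key, key ▸ div_neg_of_neg_of_pos hneg (pow_pos (by linarith) _)⟩

theorem stmt_17 (g : ℕ) (hg : 2 ≤ g) (α : ℝ) (hα : 1 < α)
    (τ : ℕ → ℝ)
    (h1 : ∀ i, 1 ≤ i → i ≤ 2 * g - 2 → i ≠ g → τ i = α⁻¹ ^ 2 * τ (i + 1))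
    (h2 : τ (2 * g - 1) = α⁻¹ * τ g)
    (h3 : τ g + τ (2 * g) = α⁻¹ * τ (2 * g))
    (hneg : τ (2 * g) < 0)
    (hpos : ∀ i, 1 ≤ i → i < 2 * g → 0 < τ i) :
    (∑ i ∈ Finset.Icc 1 (2 * g), τ i) = τ (2 * g) / α ^ (2 * g - 1) ∧
      (∑ i ∈ Finset.Icc 1 (2 * g), τ i) < 0 :=
  stmt_17_general g hg α hα τ h1 h2 h3 hneg
end
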